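/- Let F be a field of characteristic zero and let H be a nonzero element of a differential field extension of F(t, x₁,…,x_m) with δ_t(H) = a·H for some a ∈ F(t, x₁,…,x_m). If there exist p ∈ F(x₁,…,x_m)[t] nonzero and r ∈ F(t) such that a = δ_t(p)/p + r, then H is annihilated by a nonzero linear differential operator in D_t with coefficients in F(t). -/

import Mathlib

open Polynomial

/-- The derivative `d/dt` on `K(t)` (with constants `K`), by the quotient rule on the
reduced representation. -/
noncomputable def ratDeriv {K : Type*} [Field K] (f : RatFunc K) : RatFunc K :=
  (algebraMap K[X] (RatFunc K) (derivative f.num) * algebraMap K[X] (RatFunc K) f.denom -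
      algebraMap K[X] (RatFunc K) f.num * algebraMap K[X] (RatFunc K) (derivative f.denom)) /
    algebraMap K[X] (RatFunc K) (f.denom ^ 2)

/-- The natural embedding `F(t) → K(t)` induced by `F ⊆ K`. -/
noncomputable def liftRF {F K : Type*} [Field F] [Field K] [Algebra F K] :
    RatFunc F →+* RatFunc K :=
  RatFunc.mapRingHom (Polynomial.mapRingHom (algebraMap F K)) (by
    intro q hq
    simp only [Submonoid.mem_comap, Polynomial.coe_mapRingHom]
    exact mem_nonZeroDivisors_of_ne_zero
      ((Polynomial.map_ne_zero_iff (algebraMap F K).injective).mpr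
        (nonZeroDivisors.ne_zero hq)))

/-!
Put `P = ι p` and `G = H / P`. The hypothesis on `a` says exactly that `δ G = r G`, so
`δ (p⁽ⁱ⁾ G) = p⁽ⁱ⁺¹⁾ G + r p⁽ⁱ⁾ G`. Hence the `F(t)`-span of `G, p' G, …, p⁽ⁿ⁾ G`
(`n = deg p`) is closed under `δ` (which obeys the Leibniz rule for the `F(t)`-action, since
`d/dt` commutes with `F(t) → K(t)`). It contains `H = p G`, so it contains every `δʲ H`, and
as it has dimension at most `n + 1` these iterates are linearly dependent over `F(t)`.
-/

section RatFunc

variable {K : Type*} [Field K]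

lemma ratDeriv_algebraMap (q : K[X]) :
    ratDeriv (algebraMap K[X] (RatFunc K) q) = algebraMap K[X] (RatFunc K) (derivative q) := by
  simp [ratDeriv, RatFunc.num_algebraMap, RatFunc.denom_algebraMap]

lemma ratDeriv_div (u v : K[X]) (hv : v ≠ 0) :
    ratDeriv (algebraMap K[X] (RatFunc K) u / algebraMap K[X] (RatFunc K) v) =
      algebraMap K[X] (RatFunc K) (derivative u * v - u * derivative v) /
        algebraMap K[X] (RatFunc K) (v ^ 2) := by
  set f := algebraMap K[X] (RatFunc K) u / algebraMap K[X] (RatFunc K) v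
  have hcross : f.num * v = u * f.denom := by
    apply RatFunc.algebraMap_injective K
    rw [map_mul, map_mul, ← div_eq_div_iff (RatFunc.algebraMap_ne_zero f.denom_ne_zero)
      (RatFunc.algebraMap_ne_zero hv), RatFunc.num_div_denom]
  have hcross_deriv := congrArg derivative hcross
  simp only [derivative_mul] at hcross_deriv
  clear_value f
  unfold ratDeriv
  rw [div_eq_div_iff (RatFunc.algebraMap_ne_zero (pow_ne_zero _ f.denom_ne_zero))
    (RatFunc.algebraMap_ne_zero (pow_ne_zero _ hv))]
  simp only [← map_mul, ← map_sub]
  congr 1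
  linear_combination (f.denom * v) * hcross_deriv -
    (derivative v * f.denom + v * derivative f.denom) * hcross

variable {F : Type*} [Field F] [Algebra F K]

lemma liftRF_apply (e : RatFunc F) :
    liftRF (K := K) e = algebraMap K[X] (RatFunc K) (e.num.map (algebraMap F K)) /
      algebraMap K[X] (RatFunc K) (e.denom.map (algebraMap F K)) := by
  rw [liftRF, RatFunc.coe_mapRingHom_eq_coe_map, RatFunc.map_apply]
  rfl

lemma liftRF_algebraMap (q : F[X]) :
    liftRF (K := K) (algebraMap F[X] (RatFunc F) q) =
      algebraMap K[X] (RatFunc K) (q.map (algebraMap F K)) := by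
  simp [liftRF_apply, RatFunc.num_algebraMap, RatFunc.denom_algebraMap]

lemma ratDeriv_liftRF (e : RatFunc F) :
    ratDeriv (liftRF (K := K) e) = liftRF (ratDeriv e) := by
  rw [liftRF_apply, ratDeriv_div _ _ ((Polynomial.map_ne_zero_iff
    (algebraMap F K).injective).mpr e.denom_ne_zero), ratDeriv]
  simp only [map_div₀, ← map_mul, ← map_sub, liftRF_algebraMap, derivative_map,
    Polynomial.map_sub, Polynomial.map_mul, Polynomial.map_pow]

end RatFunc

section Module

variable {k M : Type*} [Field k] [AddCommGroup M] [Module k M]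

theorem Submodule.exists_sum_range_smul_eq_zero_of_forall_mem (W : Submodule k M)
    [FiniteDimensional k W] (f : ℕ → M) (hf : ∀ j, f j ∈ W) :
    ∃ (ρ : ℕ) (ℓ : ℕ → k), ℓ ρ ≠ 0 ∧ ∑ j ∈ Finset.range (ρ + 1), ℓ j • f j = 0 := by
  have hdep : ¬LinearIndependent k f := fun h =>
    Module.Finite.not_linearIndependent_of_infinite (R := k) _
      (LinearIndependent.of_comp W.subtype (v := fun j => (⟨f j, hf j⟩ : W)) h)
  obtain ⟨l, hl, hl0⟩ := not_linearIndependent_iff_linearCombination.mp hdep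
  have hsupp : l.support.Nonempty := Finsupp.support_nonempty_iff.mpr hl0
  refine ⟨l.support.max' hsupp, l, Finsupp.mem_support_iff.mp (l.support.max'_mem hsupp), ?_⟩
  have hsub : l.support ⊆ Finset.range (l.support.max' hsupp + 1) := fun i hi =>
    Finset.mem_range_succ_iff.mpr (l.support.le_max' i hi)
  rwa [Finsupp.linearCombination_apply, Finsupp.sum_of_support_subset l hsub (fun i c => c • f i)
    (fun _ _ => zero_smul k _)] at hl

theorem Submodule.mapsTo_span_of_leibniz (δ : M → M) (D : k → k)
    (hadd : ∀ x y, δ (x + y) = δ x + δ y) (hsmul : ∀ (c : k) x, δ (c • x) = D c • x + c • δ x)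
    {S : Set M} (hS : ∀ s ∈ S, δ s ∈ span k S) : Set.MapsTo δ (span k S) (span k S) := by
  intro x hx
  induction hx using Submodule.span_induction with
  | mem s hs => exact hS s hs
  | zero =>
    have hδ0 : δ 0 = 0 := by simpa using hadd 0 0
    rw [hδ0]
    exact zero_mem _
  | add x y _ _ hx hy => exact hadd x y ▸ add_mem hx hy
  | smul c x hx' hx => exact hsmul c x ▸ add_mem (smul_mem _ _ hx') (smul_mem _ _ hx)

theorem exists_sum_range_smul_iterate_eq_zero (δ : M → M) (D : k → k)
    (hadd : ∀ x y, δ (x + y) = δ x + δ y) (hsmul : ∀ (c : k) x, δ (c • x) = D c • x + c • δ x)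
    (g : ℕ → M) (c : k) (hg : ∀ i, δ (g i) = g (i + 1) + c • g i) (n : ℕ)
    (hgn : ∀ i, n < i → g i = 0) :
    ∃ (ρ : ℕ) (ℓ : ℕ → k), ℓ ρ ≠ 0 ∧ ∑ j ∈ Finset.range (ρ + 1), ℓ j • δ^[j] (g 0) = 0 := by
  set W := Submodule.span k (g '' Set.Iic n)
  have hgW : ∀ i, g i ∈ W := fun i =>
    if hi : i ≤ n then Submodule.subset_span ⟨i, hi, rfl⟩
    else hgn i (not_le.mp hi) ▸ W.zero_mem
  have : FiniteDimensional k W := FiniteDimensional.span_of_finite k ((Set.finite_Iic n).image g)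
  have hW : Set.MapsTo δ W W := Submodule.mapsTo_span_of_leibniz δ D hadd hsmul (by
    rintro _ ⟨i, -, rfl⟩
    rw [hg]
    exact add_mem (hgW _) (W.smul_mem _ (hgW _)))
  exact W.exists_sum_range_smul_eq_zero_of_forall_mem _ fun j => hW.iterate j (hgW 0)

end Module

theorem leibniz_mul_div_of_eq_logDeriv_add {L : Type*} [Field L] (δ : L → L)
    (hmul : ∀ u v : L, δ (u * v) = δ u * v + u * δ v) {P H s : L} (hP : P ≠ 0)
    (hH : δ H = (δ P / P + s) * H) (Q : L) : δ (Q * (H / P)) = (δ Q + s * Q) * (H / P) := by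
  have hG : δ (H / P) = s * (H / P) := by
    have h := hmul P (H / P)
    rw [mul_div_cancel₀ H hP, hH] at h
    apply mul_left_cancel₀ hP
    rw [mul_left_comm, mul_div_cancel₀ H hP]
    linear_combination -h
  rw [hmul, hG]
  ring

theorem hyperexponential_Dt_separable_general {F : Type*} [Field F] (m : ℕ)
    {L : Type*} [Field L]
    (ι : RatFunc (FractionRing (MvPolynomial (Fin m) F)) →+* L)
    (δ : L → L) (hδadd : ∀ u v : L, δ (u + v) = δ u + δ v)
    (hδmul : ∀ u v : L, δ (u * v) = δ u * v + u * δ v)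
    (hδι : ∀ w, δ (ι w) = ι (ratDeriv w))
    (H : L)
    (a : RatFunc (FractionRing (MvPolynomial (Fin m) F)))
    (hHa : δ H = ι a * H)
    (p : Polynomial (FractionRing (MvPolynomial (Fin m) F))) (hp : p ≠ 0)
    (r : RatFunc F)
    (ha : a = ratDeriv (algebraMap _ _ p) / algebraMap _ _ p + liftRF r) :
    ∃ (ρ : ℕ) (ℓ : ℕ → RatFunc F), ℓ ρ ≠ 0 ∧
      ∑ j ∈ Finset.range (ρ + 1), ι (liftRF (ℓ j)) * δ^[j] H = 0 := by
  -- `F(t)` acts on `L` through `ι ∘ liftRF`, so `ℓ • x` is `ι (liftRF ℓ) * x`.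
  let : Algebra (RatFunc F) L := (ι.comp liftRF).toAlgebra
  set P := ι (algebraMap _ _ p)
  have hP : P ≠ 0 := (map_ne_zero ι).mpr (RatFunc.algebraMap_ne_zero hp)
  have hlog : δ H = (δ P / P + ι (liftRF r)) * H := by rw [hHa, ha, hδι, map_add, map_div₀]
  have hsmul (c : RatFunc F) (x : L) : δ (c • x) = ratDeriv c • x + c • δ x := by
    change δ (ι (liftRF c) * x) = ι (liftRF (ratDeriv c)) * x + ι (liftRF c) * δ x
    rw [hδmul, hδι, ratDeriv_liftRF]
  have hg (i : ℕ) : δ (ι (algebraMap _ _ (derivative^[i] p)) * (H / P)) =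
      ι (algebraMap _ _ (derivative^[i + 1] p)) * (H / P) +
        r • (ι (algebraMap _ _ (derivative^[i] p)) * (H / P)) := by
    rw [leibniz_mul_div_of_eq_logDeriv_add δ hδmul hP hlog, hδι, ratDeriv_algebraMap,
      Function.iterate_succ_apply', Algebra.smul_def]
    simp only [RingHom.algebraMap_toAlgebra, RingHom.comp_apply]
    ring
  have hgn (i : ℕ) (hi : p.natDegree < i) :
      ι (algebraMap _ _ (derivative^[i] p)) * (H / P) = 0 := by
    rw [iterate_derivative_eq_zero hi, map_zero, map_zero, zero_mul]
  obtain ⟨ρ, ℓ, hρ, hrel⟩ := exists_sum_range_smul_iterate_eq_zero δ ratDeriv hδadd hsmul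
    _ r hg p.natDegree hgn
  rw [Function.iterate_zero_apply, mul_div_cancel₀ H hP] at hrel
  exact ⟨ρ, ℓ, hρ, hrel⟩

/-- Hyperexponential case. Let `K = F(x₁, …, x_m)` and let `L` be a differential field
extension of `F(t, x₁, …, x_m) = K(t)` via `ι`, with derivation `δ` extending `∂/∂t`.
Let `H ∈ L` be nonzero and hyperexponential: `δ(H) = a·H` with `a ∈ K(t)`. If there are a
nonzero `p ∈ F(x₁,…,x_m)[t] = K[t]` and `r ∈ F(t)` with `a = δ_t(p)/p + r`, then `H` is
annihilated by a nonzero operator `Σ ℓ_j D_t^j` with `ℓ_j ∈ F(t)`. -/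
theorem hyperexponential_Dt_separable {F : Type*} [Field F] [CharZero F] (m : ℕ)
    {L : Type*} [Field L]
    (ι : RatFunc (FractionRing (MvPolynomial (Fin m) F)) →+* L)
    (δ : L → L) (hδadd : ∀ u v : L, δ (u + v) = δ u + δ v)
    (hδmul : ∀ u v : L, δ (u * v) = δ u * v + u * δ v)
    (hδι : ∀ w, δ (ι w) = ι (ratDeriv w))
    (H : L) (hH : H ≠ 0)
    (a : RatFunc (FractionRing (MvPolynomial (Fin m) F)))
    (hHa : δ H = ι a * H)
    (p : Polynomial (FractionRing (MvPolynomial (Fin m) F))) (hp : p ≠ 0)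
    (r : RatFunc F)
    (ha : a = ratDeriv (algebraMap _ _ p) / algebraMap _ _ p + liftRF r) :
    ∃ (ρ : ℕ) (ℓ : ℕ → RatFunc F), ℓ ρ ≠ 0 ∧
      ∑ j ∈ Finset.range (ρ + 1), ι (liftRF (ℓ j)) * δ^[j] H = 0 :=
  hyperexponential_Dt_separable_general m ι δ hδadd hδmul hδι H a hHa p hp r ha
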